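/- If n is a positive integer with KL(n) ≥ 0, then for every integer m > 1 one has KL(m·n) > 0. -/
import Mathlib


/-- `KL n = ∑_{d ∣ n} d · log (d / (2 φ(d)))`. -/
noncomputable def KL (n : ℕ) : ℝ :=
  ∑ d ∈ n.divisors, (d : ℝ) * Real.log ((d : ℝ) / (2 * (Nat.totient d : ℝ)))

noncomputable def Sig (n : ℕ) : ℝ := ∑ d ∈ n.divisors, (d : ℝ)

lemma Sig_pos {n : ℕ} (hn : 0 < n) : 0 < Sig n := by
  have h1 : 1 ∈ n.divisors := Nat.one_mem_divisors.mpr hn.ne'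
  have h2 : (1 : ℝ) ≤ Sig n := by
    simpa [Sig] using Finset.single_le_sum (f := fun d : ℕ => (d : ℝ))
      (fun d _ => by positivity) h1
  linarith

lemma sum_divisors_coprime_mul {m n : ℕ} (hm : m ≠ 0) (hn : n ≠ 0)
    (h : Nat.Coprime m n) (F : ℕ → ℝ) :
    ∑ d ∈ (m * n).divisors, F d
      = ∑ i ∈ m.divisors, ∑ j ∈ n.divisors, F (i * j) := by
  rw [← Finset.sum_product']
  refine Finset.sum_nbij' (fun d => (d.gcd m, d.gcd n)) (fun p => p.1 * p.2)
    ?_ ?_ ?_ ?_ ?_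
  · intro d hd
    rw [Finset.mem_product]
    exact ⟨Nat.mem_divisors.mpr ⟨Nat.gcd_dvd_right _ _, hm⟩,
      Nat.mem_divisors.mpr ⟨Nat.gcd_dvd_right _ _, hn⟩⟩
  · intro p hp
    rw [Finset.mem_product] at hp
    exact Nat.mem_divisors.mpr ⟨mul_dvd_mul (Nat.mem_divisors.mp hp.1).1
      (Nat.mem_divisors.mp hp.2).1, mul_ne_zero hm hn⟩
  · intro d hd
    have hdvd : d ∣ m * n := (Nat.mem_divisors.mp hd).1
    have := (Nat.Coprime.gcd_mul d h).symm
    rwa [Nat.gcd_eq_left hdvd] at this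
  · intro p hp
    rw [Finset.mem_product] at hp
    have hi : p.1 ∣ m := (Nat.mem_divisors.mp hp.1).1
    have hj : p.2 ∣ n := (Nat.mem_divisors.mp hp.2).1
    have hjm : Nat.Coprime p.2 m := Nat.Coprime.coprime_dvd_left hj h.symm
    have hin : Nat.Coprime p.1 n := Nat.Coprime.coprime_dvd_left hi h
    have e1 : (p.1 * p.2).gcd m = p.1 := by
      rw [Nat.Coprime.gcd_mul_right_cancel p.1 hjm, Nat.gcd_eq_left hi]
    have e2 : (p.1 * p.2).gcd n = p.2 := by
      rw [Nat.Coprime.gcd_mul_left_cancel p.2 hin, Nat.gcd_eq_left hj]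
    exact Prod.ext e1 e2
  · intro d hd
    have hdvd : d ∣ m * n := (Nat.mem_divisors.mp hd).1
    have := Nat.Coprime.gcd_mul d h
    rw [Nat.gcd_eq_left hdvd] at this
    rw [← this]

lemma Sig_prime_pow {p : ℕ} (hp : p.Prime) (a : ℕ) :
    Sig (p ^ a) = ∑ k ∈ Finset.range (a + 1), (p : ℝ) ^ k := by
  rw [Sig, Nat.sum_divisors_prime_pow hp]
  push_cast
  rfl

lemma KL_pow_mul {p : ℕ} (hp : p.Prime) (a n : ℕ) (hn : 0 < n) (hpn : ¬ p ∣ n) :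
    KL (p ^ a * n) = Sig (p ^ a) * KL n
      + (Sig (p ^ a) - 1) * Sig n * Real.log ((p : ℝ) / ((p : ℝ) - 1)) := by
  have hp1 : (1 : ℝ) < (p : ℝ) := by exact_mod_cast hp.one_lt
  have hcop : Nat.Coprime p n := (Nat.Prime.coprime_iff_not_dvd hp).mpr hpn
  rw [KL, sum_divisors_coprime_mul (pow_ne_zero a hp.ne_zero) hn.ne' (hcop.pow_left a) _,
    Nat.sum_divisors_prime_pow hp, Finset.sum_range_succ']
  have inner : ∀ k : ℕ, ∑ j ∈ n.divisors,
      ((p ^ (k+1) * j : ℕ) : ℝ) * Real.log (((p ^ (k+1) * j : ℕ) : ℝ)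
        / (2 * ((p ^ (k+1) * j).totient : ℝ)))
      = (p : ℝ) ^ (k+1) * (KL n + Sig n * Real.log ((p : ℝ) / ((p : ℝ) - 1))) := by
    intro k
    have hterm : ∀ j ∈ n.divisors, ((p ^ (k+1) * j : ℕ) : ℝ) * Real.log (((p ^ (k+1) * j : ℕ) : ℝ)
        / (2 * ((p ^ (k+1) * j).totient : ℝ)))
        = (p : ℝ) ^ (k+1) * ((j : ℝ) * Real.log ((j : ℝ) / (2 * (j.totient : ℝ)))
          + (j : ℝ) * Real.log ((p : ℝ) / ((p : ℝ) - 1))) := by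
      intro j hj
      have hjd : j ∣ n := (Nat.mem_divisors.mp hj).1
      have hj0 : 0 < j := Nat.pos_of_mem_divisors hj
      have hφ : 0 < j.totient := Nat.totient_pos.mpr hj0
      have hpj : ¬ p ∣ j := fun h => hpn (h.trans hjd)
      have hcopj : Nat.Coprime (p ^ (k+1)) j := (hp.coprime_iff_not_dvd.mpr hpj).pow_left _
      have htot : (p ^ (k+1) * j).totient = p ^ k * (p - 1) * j.totient := by
        rw [Nat.totient_mul hcopj, Nat.totient_prime_pow hp (Nat.succ_pos k)]
        simp
      have hcast : ((p ^ (k+1) * j : ℕ) : ℝ) = (p : ℝ) ^ (k+1) * (j : ℝ) := by push_cast; ring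
      have hcastφ : (((p ^ (k+1) * j).totient : ℕ) : ℝ)
          = (p : ℝ) ^ k * ((p : ℝ) - 1) * (j.totient : ℝ) := by
        rw [htot]
        push_cast [Nat.cast_sub hp.one_le]
        ring
      have hjR : (0 : ℝ) < j := by exact_mod_cast hj0
      have hφR : (0 : ℝ) < (j.totient : ℝ) := by exact_mod_cast hφ
      have hpR : (0 : ℝ) < (p : ℝ) := by linarith
      have hp1R : (0 : ℝ) < (p : ℝ) - 1 := by linarith
      have harg : ((p ^ (k+1) * j : ℕ) : ℝ) / (2 * ((p ^ (k+1) * j).totient : ℝ))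
          = ((j : ℝ) / (2 * (j.totient : ℝ))) * ((p : ℝ) / ((p : ℝ) - 1)) := by
        rw [hcast, hcastφ]
        field_simp
        ring
      rw [harg, hcast, Real.log_mul (by positivity) (by positivity)]
      ring
    rw [Finset.sum_congr rfl hterm, ← Finset.mul_sum, Finset.sum_add_distrib,
      ← Finset.sum_mul, KL, Sig]
  have h0 : ∑ j ∈ n.divisors, ((p ^ 0 * j : ℕ) : ℝ) * Real.log (((p ^ 0 * j : ℕ) : ℝ)
      / (2 * ((p ^ 0 * j).totient : ℝ))) = KL n := by
    simp [KL]
  rw [h0]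
  have : ∀ k ∈ Finset.range a, ∑ j ∈ n.divisors,
      ((p ^ (k+1) * j : ℕ) : ℝ) * Real.log (((p ^ (k+1) * j : ℕ) : ℝ)
        / (2 * ((p ^ (k+1) * j).totient : ℝ)))
      = (p : ℝ) ^ (k+1) * (KL n + Sig n * Real.log ((p : ℝ) / ((p : ℝ) - 1))) :=
    fun k _ => inner k
  rw [Finset.sum_congr rfl this, ← Finset.sum_mul]
  have hsig : Sig (p ^ a) = (∑ k ∈ Finset.range a, (p : ℝ) ^ (k+1)) + 1 := by
    rw [Sig_prime_pow hp, Finset.sum_range_succ']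
    simp
  rw [hsig]
  ring

lemma KL_prime_mul {p : ℕ} (hp : p.Prime) (n : ℕ) (hn : 0 < n) (hK : 0 ≤ KL n) :
    0 < KL (p * n) := by
  set a := n.factorization p with ha
  set n' := n / p ^ a with hn'
  have hfac : p ^ a * n' = n := Nat.ordProj_mul_ordCompl_eq_self n p
  have hnd : ¬ p ∣ n' := Nat.not_dvd_ordCompl hp hn.ne'
  have hn'pos : 0 < n' := Nat.ordCompl_pos p hn.ne'
  have hmul : p * n = p ^ (a + 1) * n' := by rw [← hfac]; ring
  have e1 : KL n = Sig (p ^ a) * KL n'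
      + (Sig (p ^ a) - 1) * Sig n' * Real.log ((p : ℝ) / ((p : ℝ) - 1)) := by
    rw [← hfac]; exact KL_pow_mul hp a n' hn'pos hnd
  have e2 : KL (p * n) = Sig (p ^ (a+1)) * KL n'
      + (Sig (p ^ (a+1)) - 1) * Sig n' * Real.log ((p : ℝ) / ((p : ℝ) - 1)) := by
    rw [hmul]; exact KL_pow_mul hp (a+1) n' hn'pos hnd
  have hp1 : (1 : ℝ) < (p : ℝ) := by exact_mod_cast hp.one_lt
  have hA : 0 < Sig (p ^ a) := Sig_pos (pow_pos hp.pos a)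
  have hB : Sig (p ^ (a+1)) = Sig (p ^ a) + (p : ℝ) ^ (a+1) := by
    rw [Sig_prime_pow hp, Sig_prime_pow hp, Finset.sum_range_succ]
  have hS : 0 < Sig n' := Sig_pos hn'pos
  have hL : 0 < Real.log ((p : ℝ) / ((p : ℝ) - 1)) := by
    apply Real.log_pos
    rw [lt_div_iff₀ (by linarith)]
    linarith
  have hq : (0 : ℝ) < (p : ℝ) ^ (a+1) := by positivity
  rw [e1] at hK
  rw [e2, hB]
  nlinarith [mul_pos hS hL, mul_pos (mul_pos hS hL) hq, mul_nonneg hK hq.le]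

lemma KL_aux : ∀ m : ℕ, ∀ n : ℕ, 0 < n → 0 ≤ KL n → 1 < m → 0 < KL (m * n) := by
  intro m
  induction m using Nat.strong_induction_on with
  | _ m ih =>
    intro n hn hK hm
    have hm1 : m ≠ 1 := by omega
    have hp : (m.minFac).Prime := Nat.minFac_prime hm1
    set p := m.minFac with hpdef
    set q := m / p with hqdef
    have hpq : p * q = m := Nat.mul_div_cancel' (Nat.minFac_dvd m)
    have h1 : 0 < KL (p * n) := KL_prime_mul hp n hn hK
    by_cases hq1 : q = 1
    · have : m = p := by rw [← hpq, hq1, mul_one]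
      rwa [this]
    · have hq0 : q ≠ 0 := by
        intro h; rw [h, mul_zero] at hpq; omega
      have hq2 : 1 < q := Nat.lt_of_le_of_ne (Nat.one_le_iff_ne_zero.mpr hq0) (Ne.symm hq1)
      have hql : q < m := by
        calc q = m / p := hqdef
        _ < m := Nat.div_lt_self (by omega) hp.one_lt
      have := ih q hql (p * n) (Nat.mul_pos hp.pos hn) h1.le hq2
      have heq : q * (p * n) = m * n := by rw [← mul_assoc, mul_comm q p, hpq]
      rwa [heq] at this

theorem KL_mul_pos (n : ℕ) (hn : 0 < n) (hKL : KL n ≥ 0) :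
    ∀ m : ℕ, 1 < m → KL (m * n) > 0 := by
  intro m hm
  exact KL_aux m n hn hKL hm
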